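/- For every edge price α > 2n−6, no stable (pure Nash equilibrium) network (G(s),α) of a network creation game with n agents contains a strong critical pair. -/

import Mathlib

open scoped BigOperators

namespace NCG

variable {V : Type*} [Fintype V] [DecidableEq V]

/-- The network induced by a strategy vector `st`: `{u,v}` is an edge iff (at least)
one of the endpoints buys it, i.e. `v ∈ st u` or `u ∈ st v`. -/
def graph (st : V → Finset V) : SimpleGraph V where
  Adj u v := u ≠ v ∧ (v ∈ st u ∨ u ∈ st v)
  symm := ⟨fun u v h => ⟨h.1.symm, h.2.symm⟩⟩
  loopless := ⟨fun u h => h.1 rfl⟩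

open scoped Classical in
/-- The distance cost of agent `u`: the sum of the graph distances to all nodes if the
network is connected, and `⊤` otherwise. -/
noncomputable def distcost (st : V → Finset V) (u : V) : EReal :=
  if (graph st).Connected then (((∑ w : V, ((graph st).dist u w : ℝ)) : ℝ) : EReal) else ⊤

/-- The cost of agent `u`: `α` per bought edge plus the distance cost. -/
noncomputable def cost (α : ℝ) (st : V → Finset V) (u : V) : EReal :=
  ((α * (st u).card : ℝ) : EReal) + distcost st u

/-- A network is stable (a pure Nash equilibrium) if no agent `u` can strictly
decrease her cost by unilaterally changing her own strategy set `st u`. -/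
def Stable (α : ℝ) (st : V → Finset V) : Prop :=
  ∀ u : V, ∀ t : Finset V, u ∉ t → cost α st u ≤ cost α (Function.update st u t) u

/-- The social cost of a network: the sum of the costs of all agents. -/
noncomputable def socialCost (α : ℝ) (st : V → Finset V) : EReal :=
  ∑ u : V, cost α st u

/-- The optimal (minimum) social cost over all strategy vectors on agent set `W`. -/
noncomputable def optCost (α : ℝ) (W : Type*) [Fintype W] [DecidableEq W] : EReal :=
  sInf {c : EReal | ∃ st : W → Finset W, (∀ u, u ∉ st u) ∧ c = socialCost α st}

/-- `T` is a shortest path tree of `G` rooted at `r`: a spanning tree of `G`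
preserving all distances from `r`. -/
def IsSPT (G : SimpleGraph V) (r : V) (T : SimpleGraph V) : Prop :=
  T ≤ G ∧ T.IsTree ∧ ∀ x, T.dist r x = G.dist r x

/-- The subgraph of `G` induced on `S` is biconnected: it has at least 3 vertices,
it is connected, and it has no cut vertex. -/
def IsBiconnectedOn (G : SimpleGraph V) (S : Set V) : Prop :=
  3 ≤ S.ncard ∧ (G.induce S).Connected ∧ ∀ x ∈ S, (G.induce (S \ {x})).Connected

/-- `S` induces a biconnected component of `G`: a maximal biconnected induced subgraph. -/
def IsBiconnectedComponent (G : SimpleGraph V) (S : Set V) : Prop :=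
  IsBiconnectedOn G S ∧ ∀ S' : Set V, S ⊆ S' → IsBiconnectedOn G S' → S' = S

/-- `⟨v,u⟩` is a critical pair (with witnesses `v₁, v₂, u'` and biconnected component `H`)
of the network induced by the strategy vector `st`:
(1) `v ∈ H` buys the two distinct non-bridge edges `(v,v₁)` and `(v,v₂)` with `v₁,v₂ ∈ H`;
(2) `u ∈ H`, `u ≠ v`, buys an edge `(u,u')` with `u' ∈ H`, `u' ≠ v`;
(3) `d(v,u) ≥ 2`;
(4) some shortest path from `v` to `u` uses the edge `(v,v₁)`;
(5) some shortest path from `v` to `u'` does not use the edge `(u,u')`. -/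
def IsCriticalPair (st : V → Finset V) (H : Set V) (v u v₁ v₂ u' : V) : Prop :=
  IsBiconnectedComponent (graph st) H ∧
  v ∈ H ∧ v₁ ∈ H ∧ v₂ ∈ H ∧ v₁ ≠ v₂ ∧
  v₁ ∈ st v ∧ v₂ ∈ st v ∧
  ¬ (graph st).IsBridge (s(v, v₁)) ∧ ¬ (graph st).IsBridge s(v, v₂) ∧
  u ∈ H ∧ u ≠ v ∧ u' ∈ H ∧ u' ≠ v ∧ u' ∈ st u ∧
  2 ≤ (graph st).dist v u ∧
  (∃ p : (graph st).Walk v u, p.IsPath ∧ p.length = (graph st).dist v u ∧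
    s(v, v₁) ∈ p.edges) ∧
  (∃ p : (graph st).Walk v u', p.IsPath ∧ p.length = (graph st).dist v u' ∧
    s(u, u') ∉ p.edges)

/-- A critical pair is strong if moreover some shortest path from `u` to `v₂`
does not use the edge `(v,v₂)`. -/
def IsStrongCriticalPair (st : V → Finset V) (H : Set V) (v u v₁ v₂ u' : V) : Prop :=
  IsCriticalPair st H v u v₁ v₂ u' ∧
  ∃ p : (graph st).Walk u v₂, p.IsPath ∧ p.length = (graph st).dist u v₂ ∧
    s(v, v₂) ∉ p.edges

/-- A cycle `c` in `G` is a min cycle if for every two vertices on the cycle, their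
distance along the cycle equals their distance in `G`. -/
def IsMinCycle (G : SimpleGraph V) {a : V} (c : G.Walk a a) : Prop :=
  c.IsCycle ∧ ∀ (x : V) (hx : x ∈ c.toSubgraph.verts) (y : V) (hy : y ∈ c.toSubgraph.verts),
    c.toSubgraph.coe.dist ⟨x, hx⟩ ⟨y, hy⟩ = G.dist x y

/-- A cycle `c` of the network induced by `st` is directed if, traversed in one of the
two possible directions, every edge of the cycle is bought by its tail vertex. -/
def IsDirectedCycle (st : V → Finset V) {a : V} (c : (graph st).Walk a a) : Prop :=
  c.IsCycle ∧
    ((∀ i < c.length, c.getVert (i + 1) ∈ st (c.getVert i)) ∨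
     (∀ i < c.length, c.getVert i ∈ st (c.getVert (i + 1))))

/-- `c` is a centroid of (the subgraph of `G` induced on) `S`: every connected component
obtained from `S` by removing `c` contains at most `|S|/2` vertices. -/
def IsCentroidOn (G : SimpleGraph V) (S : Set V) (c : V) : Prop :=
  c ∈ S ∧ ∀ x ∈ S, x ≠ c →
    2 * {y | y ∈ S ∧ ∃ p : G.Walk x y, c ∉ p.support ∧ ∀ z ∈ p.support, z ∈ S}.ncard
      ≤ S.ncard

end NCG

/-!
Let `⟨v, u⟩` be a strong critical pair and consider two deviations: `v` trades its edges to
`v₁, v₂` for a single edge to `u`, and `u` trades its edge to `u'` for an edge to `v`.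
Conditions (4), (5) and strongness yield shortest detours to `v₁`, `v₂`, `u'` that avoid the
deviating agent, so after either swap that agent is within `d(other, w) + 1` of every `w`. Adding
the two stability inequalities gives `α + 2 d(u, v) + 2 ≤ 2n`, and `d(u, v) ≥ 2` yields
`α ≤ 2n - 6`.
-/

namespace SimpleGraph

variable {V : Type*} {G G' : SimpleGraph V}

namespace Walk

theorem dist_add_dist_le_length [DecidableEq V] {x y z : V} (p : G.Walk x y)
    (hz : z ∈ p.support) : G.dist x z + G.dist z y ≤ p.length := by
  calc G.dist x z + G.dist z y
      ≤ (p.takeUntil z hz).length + (p.dropUntil z hz).length :=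
        add_le_add (dist_le _) (dist_le _)
    _ = p.length := by rw [← length_append, take_spec]

/-- Otherwise the walk up to `a`, followed by the edge `a y`, would be shorter. -/
theorem notMem_support_of_notMem_edges [DecidableEq V] {x y a : V} (p : G.Walk x y)
    (hp : p.length = G.dist x y) (hay : G.Adj a y) (he : s(a, y) ∉ p.edges) :
    a ∉ p.support := by
  intro ha
  have hsplit := congrArg length (p.take_spec ha)
  rw [length_append] at hsplit
  have hshortcut := dist_le ((p.takeUntil a ha).concat hay)
  rw [length_concat] at hshortcut
  have hdrop : 2 ≤ (p.dropUntil a ha).length := by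
    have he' : s(a, y) ∉ (p.dropUntil a ha).edges :=
      fun h => he (p.edges_dropUntil_subset_edges ha h)
    generalize p.dropUntil a ha = q at he' ⊢
    cases q with
    | nil => exact absurd rfl hay.ne
    | cons h q =>
      cases q with
      | nil => simp at he'
      | cons _ _ => simp
  omega

/-- `c` is one step closer to `b` than `a`, so a shortest walk from `b` to `c` cannot pass
through `a`. -/
theorem notMem_support_of_mem_edges [DecidableEq V] {a b c : V} (p : G.Walk a b)
    (hp : p.length = G.dist a b) (hac : s(a, c) ∈ p.edges) (q : G.Walk b c)
    (hq : q.length = G.dist b c) : a ∉ q.support := by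
  intro ha
  have hp' := p.dist_add_dist_le_length (p.snd_mem_support_of_mem_edges hac)
  have hq' := q.dist_add_dist_le_length ha
  have hac' := dist_eq_one_iff_adj.2 (p.adj_of_mem_edges hac)
  have := dist_comm (G := G) (u := a) (v := b)
  have := dist_comm (G := G) (u := b) (v := c)
  omega

theorem exists_length_eq_of_notMem_support {a : V}
    (hkeep : ∀ x y, G.Adj x y → x ≠ a → y ≠ a → G'.Adj x y) :
    ∀ {x y : V} (p : G.Walk x y), a ∉ p.support → ∃ q : G'.Walk x y, q.length = p.length
  | _, _, nil, _ => ⟨nil, rfl⟩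
  | _, _, cons h p, ha => by
    rw [support_cons, List.mem_cons, not_or] at ha
    obtain ⟨q, hq⟩ := exists_length_eq_of_notMem_support hkeep p ha.2
    have hy : _ ≠ a := fun hy => ha.2 (hy ▸ p.start_mem_support)
    exact ⟨cons (hkeep _ _ h (Ne.symm ha.1) hy) q, by rw [length_cons, length_cons, hq]⟩

end Walk

open Walk in
theorem exists_walk_length_le_dist_add_one [DecidableEq V] (hG : G.Connected) {a b : V}
    (hkeep : ∀ x y, G.Adj x y → x ≠ a → y ≠ a → G'.Adj x y) (hab : G'.Adj a b)
    (hdetour : ∀ x, G.Adj a x → ¬ G'.Adj a x →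
      ∃ p : G.Walk b x, a ∉ p.support ∧ p.length = G.dist b x)
    (w : V) : ∃ p : G'.Walk a w, p.length ≤ G.dist b w + 1 := by
  obtain ⟨S, hS⟩ := hG.exists_walk_length_eq_dist b w
  by_cases haS : a ∈ S.support
  · have hba := S.dist_add_dist_le_length haS
    obtain ⟨T, hTpath, hT⟩ := hG.exists_path_of_dist a w
    cases T with
    | nil => exact ⟨nil, by simp⟩
    | @cons _ x _ hax T =>
      rw [cons_isPath_iff] at hTpath
      rw [length_cons] at hT
      obtain ⟨T', hT'⟩ := T.exists_length_eq_of_notMem_support hkeep hTpath.2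
      by_cases hax' : G'.Adj a x
      · exact ⟨cons hax' T', by rw [length_cons]; omega⟩
      · obtain ⟨D, hDa, hD⟩ := hdetour x hax hax'
        have hbx := hG.dist_triangle (u := b) (v := a) (w := x)
        rw [dist_eq_one_iff_adj.2 hax] at hbx
        obtain ⟨D', hD'⟩ := D.exists_length_eq_of_notMem_support hkeep hDa
        exact ⟨cons hab (D'.append T'), by rw [length_cons, length_append]; omega⟩
  · obtain ⟨S', hS'⟩ := S.exists_length_eq_of_notMem_support hkeep haS
    exact ⟨cons hab S', by rw [length_cons]; omega⟩

theorem sum_dist_add_dist_add_one_le [Fintype V] {a b : V}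
    (h : ∀ w, G'.dist a w ≤ G.dist b w + 1) :
    ∑ w, G'.dist a w + G.dist b a + 1 ≤ Fintype.card V + ∑ w, G.dist b w := by
  classical
  have hsplit (f : V → ℕ) := (Finset.add_sum_erase Finset.univ f (Finset.mem_univ a)).symm
  calc ∑ w, G'.dist a w + G.dist b a + 1
      = ∑ w ∈ Finset.univ.erase a, G'.dist a w + (G.dist b a + 1) := by
        rw [hsplit, dist_self]; ring
    _ ≤ ∑ w ∈ Finset.univ.erase a, (G.dist b w + 1) + (G.dist b a + 1) := by
        gcongr with w; exact h w
    _ = Fintype.card V + ∑ w, G.dist b w := by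
        rw [add_comm, ← hsplit (fun w => G.dist b w + 1), Finset.sum_add_distrib]
        simp [add_comm]

end SimpleGraph

namespace NCG

open SimpleGraph Function

variable {V : Type*} [DecidableEq V] {st : V → Finset V} {a b x y : V} {t : Finset V}

theorem graph_update_adj_of_ne (h : (graph st).Adj x y) (hx : x ≠ a) (hy : y ≠ a) :
    (graph (update st a t)).Adj x y := by
  simpa [graph, update_of_ne hx, update_of_ne hy] using h

theorem graph_update_adj_of_mem (hab : a ≠ b) (hb : b ∈ t) : (graph (update st a t)).Adj a b :=
  ⟨hab, Or.inl (by rwa [update_self])⟩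

theorem mem_sdiff_of_adj_of_not_adj_update (h : (graph st).Adj a x)
    (h' : ¬ (graph (update st a t)).Adj a x) : x ∈ st a \ t := by
  obtain ⟨hax, hx | ha⟩ := h
  · refine Finset.mem_sdiff.2 ⟨hx, fun hxt => h' ?_⟩
    exact graph_update_adj_of_mem hax hxt
  · exact absurd ⟨hax, Or.inr (by rwa [update_of_ne hax.symm])⟩ h'

variable [Fintype V] {α : ℝ}

/-- A disconnected network costs every agent `⊤`, while buying all edges costs finitely much. -/
theorem Stable.connected [Nonempty V] (hs : Stable α st) : (graph st).Connected := by
  obtain ⟨v⟩ := ‹Nonempty V›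
  by_contra hnc
  have hstar : (graph (update st v (Finset.univ.erase v))).Connected := by
    refine (connected_iff_exists_forall_reachable _).2 ⟨v, fun w => ?_⟩
    by_cases hw : w = v
    · exact hw ▸ Reachable.refl _
    · exact (graph_update_adj_of_mem (Ne.symm hw) (by simpa using hw)).reachable
  have h := hs v (Finset.univ.erase v) (by simp)
  rw [cost, cost, distcost, distcost, if_neg hnc, if_pos hstar, ← EReal.coe_add,
    EReal.add_top_of_ne_bot (EReal.coe_ne_bot _)] at h
  exact (EReal.coe_lt_top _).not_ge h

theorem Stable.le_of_update (hs : Stable α st) (hG : (graph st).Connected) (hat : a ∉ t)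
    (hG' : (graph (update st a t)).Connected) :
    α * (st a).card + ∑ w, ((graph st).dist a w : ℝ)
      ≤ α * t.card + ∑ w, ((graph (update st a t)).dist a w : ℝ) := by
  have h := hs a t hat
  rwa [cost, cost, distcost, distcost, if_pos hG, if_pos hG', update_self, ← EReal.coe_add,
    ← EReal.coe_add, EReal.coe_le_coe_iff] at h

theorem Stable.add_dist_le_of_update (hs : Stable α st) (hG : (graph st).Connected)
    (hat : a ∉ t) (hab : a ≠ b) (hbt : b ∈ t)
    (hdetour : ∀ x ∈ st a \ t,
      ∃ p : (graph st).Walk b x, a ∉ p.support ∧ p.length = (graph st).dist b x) :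
    α * (st a).card + ∑ w, ((graph st).dist a w : ℝ) + (graph st).dist b a + 1
      ≤ α * t.card + Fintype.card V + ∑ w, ((graph st).dist b w : ℝ) := by
  have hwalk := exists_walk_length_le_dist_add_one hG
    (fun _ _ h hx hy => graph_update_adj_of_ne h hx hy) (graph_update_adj_of_mem hab hbt)
    (fun x hx hx' => hdetour x (mem_sdiff_of_adj_of_not_adj_update hx hx'))
  have hG' : (graph (update st a t)).Connected :=
    (connected_iff_exists_forall_reachable _).2 ⟨a, fun w => (hwalk w).elim fun p _ => ⟨p⟩⟩
  have hsum : ((∑ w, (graph (update st a t)).dist a w + (graph st).dist b a + 1 : ℕ) : ℝ)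
      ≤ ((Fintype.card V + ∑ w, (graph st).dist b w : ℕ) : ℝ) := by
    exact_mod_cast sum_dist_add_dist_add_one_le fun w =>
      (hwalk w).elim fun p hp => (dist_le p).trans hp
  push_cast at hsum
  linarith [hs.le_of_update hG hat hG']

/-- The deviation in which `a` gives up its edges to `X` and buys an edge to `b` instead. -/
theorem Stable.add_dist_le_of_swap (hs : Stable α st) (hG : (graph st).Connected)
    (ha : a ∉ st a) (hab : a ≠ b) (hb : b ∉ st a) {X : Finset V} (hX : X ⊆ st a)
    (hdetour : ∀ x ∈ X,
      ∃ p : (graph st).Walk b x, a ∉ p.support ∧ p.length = (graph st).dist b x) :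
    α * X.card + ∑ w, ((graph st).dist a w : ℝ) + (graph st).dist b a + 1
      ≤ α + Fintype.card V + ∑ w, ((graph st).dist b w : ℝ) := by
  have hcard : ((insert b (st a \ X)).card : ℝ) + X.card = (st a).card + 1 := by
    rw [Finset.card_insert_of_notMem fun h => hb (Finset.mem_sdiff.1 h).1]
    exact_mod_cast by rw [add_right_comm, Finset.card_sdiff_add_card_eq_card hX]
  have h := hs.add_dist_le_of_update hG (t := insert b (st a \ X))
    (by simp [hab, ha]) hab (Finset.mem_insert_self _ _) fun x hx => hdetour x (by
      simp only [Finset.mem_sdiff, Finset.mem_insert, not_or, not_and, not_not] at hx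
      exact hx.2.2 hx.1)
  linear_combination h + α * hcard

end NCG

/-- For `α > 2n−6`, no stable network contains a strong critical pair. -/
theorem no_strong_critical_pair {V : Type*} [Fintype V] [DecidableEq V]
    (α : ℝ) (st : V → Finset V) (hself : ∀ u, u ∉ st u)
    (hα : 2 * (Fintype.card V : ℝ) - 6 < α)
    (hstable : NCG.Stable α st) :
    ¬ ∃ (H : Set V) (v u v₁ v₂ u' : V), NCG.IsStrongCriticalPair st H v u v₁ v₂ u' := by
  rintro ⟨-, v, u, v₁, v₂, u', ⟨⟨-, -, -, -, hv₁₂, hv₁, hv₂, -, -, -, huv, -, -, hu', hvu,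
    ⟨p, -, hp, hpv₁⟩, ⟨r, -, hr, hru'⟩⟩, q, -, hq, hqv₂⟩⟩
  have : Nonempty V := ⟨v⟩
  have hG : (NCG.graph st).Connected := hstable.connected
  have hadj {a x : V} (hx : x ∈ st a) : (NCG.graph st).Adj a x :=
    ⟨fun h => hself a (h ▸ hx), Or.inl hx⟩
  have hnu : ¬ (NCG.graph st).Adj v u := fun h => by
    rw [← SimpleGraph.dist_eq_one_iff_adj] at h; omega
  have hV := hstable.add_dist_le_of_swap hG (hself v) huv.symm (fun h => hnu (hadj h))
    (X := {v₁, v₂}) (Finset.insert_subset hv₁ (Finset.singleton_subset_iff.2 hv₂)) <| by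
    simp only [Finset.mem_insert, Finset.mem_singleton, forall_eq_or_imp, forall_eq]
    obtain ⟨W, hW⟩ := hG.exists_walk_length_eq_dist u v₁
    exact ⟨⟨W, p.notMem_support_of_mem_edges hp hpv₁ W hW, hW⟩,
      ⟨q, q.notMem_support_of_notMem_edges hq (hadj hv₂) hqv₂, hq⟩⟩
  have hU := hstable.add_dist_le_of_swap hG (hself u) huv (fun h => hnu (hadj h).symm)
    (X := {u'}) (Finset.singleton_subset_iff.2 hu') <| by
    simpa using ⟨r, r.notMem_support_of_notMem_edges hr (hadj hu') hru', hr⟩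
  rw [Finset.card_pair hv₁₂, SimpleGraph.dist_comm] at hV
  rw [Finset.card_singleton] at hU
  have hvu₂ : (2 : ℝ) ≤ (NCG.graph st).dist v u := by exact_mod_cast hvu
  push_cast at hV hU
  linarith
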